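/- Suppose κ < θ are ordinals with κ a limit ordinal and V_κ ≺_{Σ₁} V_θ. Then V_κ satisfies Zermelo set theory with choice (ZC): extensionality, foundation, pairing, union, power set, infinity, choice, and the full separation scheme. -/

import Mathlib

/-!
For limit `κ`, `V_κ` is transitive and closed under pairs, unions, power sets and subsets, which
gives every axiom but infinity; a choice function on `x` is a subset of `x × ⋃₀ x`, which lies
in `V_κ`. For infinity one needs `ω < κ`: the `Σ₁` sentence "some nonempty set has no
`∈`-maximal element" holds in `V_θ` (witness `ω`), hence in `V_κ`, and such a set has rank at
least `ω`.
-/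

open FirstOrder FirstOrder.Language Cardinal Ordinal

universe u

namespace Paper

noncomputable section

/-- The language of set theory: a single binary relation. -/
abbrev L : FirstOrder.Language := FirstOrder.Language.graph

/-- The membership relation symbol. -/
abbrev memRel : L.Relations 2 := FirstOrder.Language.adj

/-- Any class of ZF sets is an `L`-structure under `∈`. -/
instance zfStructure (S : Set ZFSet) : L.Structure S where
  funMap := fun f _ => f.elim
  RelMap := fun r v => match r with
    | .adj => (v 0 : ZFSet) ∈ (v 1 : ZFSet)

/-- The rank-initial segment `V_o` of the cumulative hierarchy, as a class of ZF sets. -/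
def Vset (o : Ordinal.{u}) : Set ZFSet.{u} := {x | x.rank < o}

/-- A transitive class of ZF sets. -/
def IsTransClass (S : Set ZFSet) : Prop := ∀ x ∈ S, x.toSet ⊆ S

abbrev BF (α : Type) (n : ℕ) : Type := L.BoundedFormula α n

/-- The atomic membership formula `t ∈ u`. -/
def memF {α : Type} {n : ℕ} (t u : L.Term (α ⊕ Fin n)) : BF α n :=
  memRel.boundedFormula₂ t u

/-- Lift a term to a context with one more bound variable. -/
def liftT {α : Type} {n : ℕ} (t : L.Term (α ⊕ Fin n)) : L.Term (α ⊕ Fin (n + 1)) :=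
  t.relabel (Sum.map id Fin.castSucc)

/-- Δ₀ formulas: built from quantifier-free formulas by propositional connectives and
bounded quantifiers `∃ x ∈ t` and `∀ x ∈ t`. -/
inductive IsDeltaZero {α : Type} : ∀ {n : ℕ}, BF α n → Prop
  | of_isQF {n} {φ : BF α n} : φ.IsQF → IsDeltaZero φ
  | imp {n} {φ ψ : BF α n} : IsDeltaZero φ → IsDeltaZero ψ → IsDeltaZero (φ.imp ψ)
  | bex {n} (t : L.Term (α ⊕ Fin n)) {φ : BF α (n + 1)} : IsDeltaZero φ →
      IsDeltaZero ((memF (Term.var (Sum.inr (Fin.last n))) (liftT t) ⊓ φ).ex)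
  | ball {n} (t : L.Term (α ⊕ Fin n)) {φ : BF α (n + 1)} : IsDeltaZero φ →
      IsDeltaZero ((memF (Term.var (Sum.inr (Fin.last n))) (liftT t) ⟹ φ).all)

/-- The Lévy hierarchy: `IsSP true k φ` means `φ` is `Σ_k`; `IsSP false k φ` means `Π_k`. -/
inductive IsSP {α : Type} : Bool → ℕ → ∀ {n : ℕ}, BF α n → Prop
  | of_deltaZero {b k n} {φ : BF α n} : IsDeltaZero φ → IsSP b k φ
  | incl {b k n} {φ : BF α n} : IsSP (!b) k φ → IsSP b (k + 1) φ
  | ex {k n} {φ : BF α (n + 1)} : IsSP true (k + 1) φ → IsSP true (k + 1) φ.ex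
  | all {k n} {φ : BF α (n + 1)} : IsSP false (k + 1) φ → IsSP false (k + 1) φ.all

/-- `φ` is a `Σ_k` formula. -/
def IsSigma {α : Type} (k : ℕ) {n : ℕ} (φ : BF α n) : Prop := IsSP true k φ

/-- `S ≺_{Σ_k} T` as ∈-structures. -/
def SigmaPrec (k : ℕ) (S T : Set ZFSet) : Prop :=
  ∃ h : S ⊆ T, ∀ (m : ℕ) (φ : L.Formula (Fin m)), IsSigma k φ →
    ∀ v : Fin m → S, (φ.Realize v ↔ φ.Realize (Set.inclusion h ∘ v))

/-- `S ≺ T`: fully elementary as ∈-structures. -/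
def FullPrec (S T : Set ZFSet) : Prop :=
  ∃ h : S ⊆ T, ∀ (m : ℕ) (φ : L.Formula (Fin m)),
    ∀ v : Fin m → S, (φ.Realize v ↔ φ.Realize (Set.inclusion h ∘ v))

/-- `η` is `Σ_k`-correct: `V_η ≺_{Σ_k} V`. -/
def SigmaCorrect (k : ℕ) (η : Ordinal) : Prop := SigmaPrec k (Vset η) Set.univ

/-- The von Neumann ordinal corresponding to an ordinal, as a ZF set. -/
def ordToZF (o : Ordinal.{u}) : ZFSet.{u} :=
  ZFSet.range.{u, u} fun i : o.ToType => ordToZF ((@Ordinal.typein o.ToType (· < ·) isWellOrder_lt) i)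
termination_by o
decreasing_by exact Ordinal.typein_lt_self i

@[simp] lemma mem_Vset {o : Ordinal.{u}} {x : ZFSet.{u}} : x ∈ Vset o ↔ x.rank < o := Iff.rfl

section BoundedQuantifiers

variable {α : Type} {n : ℕ}

def bexF (t : L.Term (α ⊕ Fin n)) (φ : BF α (n + 1)) : BF α n :=
  (memF (Term.var (Sum.inr (Fin.last n))) (liftT t) ⊓ φ).ex

def ballF (t : L.Term (α ⊕ Fin n)) (φ : BF α (n + 1)) : BF α n :=
  (memF (Term.var (Sum.inr (Fin.last n))) (liftT t) ⟹ φ).all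

variable {S : Set ZFSet.{u}} {v : α → S} {xs : Fin n → S}

@[simp] lemma realize_memF (t t' : L.Term (α ⊕ Fin n)) :
    (memF t t').Realize v xs ↔
      ((t.realize (Sum.elim v xs) : S) : ZFSet) ∈ ((t'.realize (Sum.elim v xs) : S) : ZFSet) := by
  simp only [memF, BoundedFormula.realize_rel₂]; rfl

@[simp] lemma realize_liftT (t : L.Term (α ⊕ Fin n)) (a : S) :
    (liftT t).realize (Sum.elim v (Fin.snoc xs a)) = t.realize (Sum.elim v xs) := by
  rw [liftT, Term.realize_relabel]
  congr 1
  ext (i | i) <;> simp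

@[simp] lemma realize_bexF (t : L.Term (α ⊕ Fin n)) (φ : BF α (n + 1)) :
    (bexF t φ).Realize v xs ↔
      ∃ a : S, (a : ZFSet) ∈ ((t.realize (Sum.elim v xs) : S) : ZFSet) ∧
        φ.Realize v (Fin.snoc xs a) := by
  simp [bexF]

@[simp] lemma realize_ballF (t : L.Term (α ⊕ Fin n)) (φ : BF α (n + 1)) :
    (ballF t φ).Realize v xs ↔
      ∀ a : S, (a : ZFSet) ∈ ((t.realize (Sum.elim v xs) : S) : ZFSet) →
        φ.Realize v (Fin.snoc xs a) := by
  simp [ballF]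

end BoundedQuantifiers

def memUnboundedFormula : L.Formula (Fin 0) :=
  (bexF (&0) (ballF (&0) (bexF (&0) (memF (&2) (&3))))).ex

lemma isSigma_one_memUnboundedFormula : IsSigma 1 memUnboundedFormula :=
  .ex (.of_deltaZero (.bex _ (.ball _ (.bex _ (.of_isQF (BoundedFormula.IsAtomic.rel _ _).isQF)))))

lemma realize_memUnboundedFormula {S : Set ZFSet.{u}} (v : Fin 0 → S) :
    memUnboundedFormula.Realize v ↔ ∃ x : S, ∃ e : S, (e : ZFSet) ∈ (x : ZFSet) ∧
      ∀ y : S, (y : ZFSet) ∈ (x : ZFSet) →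
        ∃ z : S, (z : ZFSet) ∈ (x : ZFSet) ∧ (y : ZFSet) ∈ (z : ZFSet) := by
  simp [memUnboundedFormula, Formula.Realize, Fin.snoc]

def IsMemUnbounded (x : ZFSet) : Prop := (∃ e, e ∈ x) ∧ ∀ y ∈ x, ∃ z ∈ x, y ∈ z

lemma IsTransClass.realize_memUnboundedFormula {S : Set ZFSet.{u}} (hS : IsTransClass S)
    (v : Fin 0 → S) : memUnboundedFormula.Realize v ↔ ∃ x ∈ S, IsMemUnbounded x := by
  rw [Paper.realize_memUnboundedFormula]
  constructor
  · rintro ⟨⟨x, hx⟩, ⟨e, _⟩, he, hmax⟩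
    refine ⟨x, hx, ⟨e, he⟩, fun y hy => ?_⟩
    obtain ⟨⟨z, _⟩, hz, hyz⟩ := hmax ⟨y, hS x hx hy⟩ hy
    exact ⟨z, hz, hyz⟩
  · rintro ⟨x, hx, ⟨e, he⟩, hmax⟩
    refine ⟨⟨x, hx⟩, ⟨e, hS x hx he⟩, he, fun ⟨y, _⟩ hy => ?_⟩
    obtain ⟨z, hz, hyz⟩ := hmax y hy
    exact ⟨⟨z, hS x hx hz⟩, hz, hyz⟩

lemma isTransClass_Vset (o : Ordinal.{u}) : IsTransClass (Vset o) :=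
  fun _ hx _ hy => (ZFSet.rank_lt_of_mem hy).trans hx

lemma IsTransClass.eq_of_forall_mem_iff {S : Set ZFSet} (hS : IsTransClass S) {x y : ZFSet}
    (hx : x ∈ S) (hy : y ∈ S) (h : ∀ z ∈ S, (z ∈ x ↔ z ∈ y)) : x = y :=
  ZFSet.ext fun z => ⟨fun hz => (h z (hS x hx hz)).1 hz, fun hz => (h z (hS y hy hz)).2 hz⟩

lemma omega0_le_rank_of_isMemUnbounded {x : ZFSet} (hx : IsMemUnbounded x) :
    ω ≤ x.rank := by
  obtain ⟨⟨e, he⟩, hmax⟩ := hx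
  have hranks : ∀ n : ℕ, ∃ y ∈ x, (n : Ordinal) ≤ y.rank := by
    intro n
    induction n with
    | zero => exact ⟨e, he, by simp⟩
    | succ n ih =>
      obtain ⟨y, hy, hny⟩ := ih
      obtain ⟨z, hz, hyz⟩ := hmax y hy
      refine ⟨z, hz, ?_⟩
      rw [Nat.cast_succ]
      exact Order.add_one_le_of_lt (hny.trans_lt (ZFSet.rank_lt_of_mem hyz))
  refine Ordinal.omega0_le.2 fun n => ?_
  obtain ⟨y, hy, hny⟩ := hranks n
  exact hny.trans (ZFSet.rank_lt_of_mem hy).le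

lemma isMemUnbounded_omega : IsMemUnbounded ZFSet.omega :=
  ⟨⟨∅, ZFSet.omega_zero⟩, fun _ hy => ⟨_, ZFSet.omega_succ hy, ZFSet.mem_insert _ _⟩⟩

lemma _root_.PSet.rank_ofNat : ∀ n : ℕ, (PSet.ofNat n).rank = n
  | 0 => PSet.rank_empty
  | n + 1 => by
    rw [PSet.ofNat, PSet.rank_insert, PSet.rank_ofNat n, Nat.cast_succ, ← Order.succ_eq_add_one]
    exact max_eq_left (Order.le_succ _)

lemma _root_.ZFSet.rank_omega_le : ZFSet.omega.rank ≤ ω := by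
  refine ZFSet.rank_le_iff.2 fun y hy => ?_
  induction y using Quotient.inductionOn with
  | h p =>
    obtain ⟨n, hn⟩ := hy
    calc ZFSet.rank ⟦p⟧ = (PSet.ofNat n.down).rank := PSet.rank_congr hn
      _ < ω := (PSet.rank_ofNat _).trans_lt (Ordinal.natCast_lt_omega0 _)

lemma SigmaPrec.realize_iff {k : ℕ} {S T : Set ZFSet} (h : SigmaPrec k S T)
    {φ : L.Formula (Fin 0)} (hφ : IsSigma k φ) (v : Fin 0 → S) (w : Fin 0 → T) :
    φ.Realize v ↔ φ.Realize w := by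
  obtain ⟨hST, hreal⟩ := h
  rw [hreal 0 φ hφ v, Subsingleton.elim (Set.inclusion hST ∘ v) w]

lemma omega0_lt_of_sigmaPrec_one {κ θ : Ordinal.{u}} (hθ : ω < θ)
    (h : SigmaPrec 1 (Vset κ) (Vset θ)) : ω < κ := by
  have hθreal : memUnboundedFormula.Realize (default : Fin 0 → Vset θ) :=
    ((isTransClass_Vset θ).realize_memUnboundedFormula _).2
      ⟨_, ZFSet.rank_omega_le.trans_lt hθ, isMemUnbounded_omega⟩
  obtain ⟨x, hx, hxu⟩ := ((isTransClass_Vset κ).realize_memUnboundedFormula default).1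
    ((h.realize_iff isSigma_one_memUnboundedFormula _ _).2 hθreal)
  exact (omega0_le_rank_of_isMemUnbounded hxu).trans_lt hx

lemma _root_.ZFSet.exists_mem_forall_not_mem_of_ne_empty {x : ZFSet} (hx : x ≠ ∅) :
    ∃ y ∈ x.toSet, ∀ z ∈ y.toSet, z ∉ x.toSet := by
  obtain ⟨y, hy, hxy⟩ := ZFSet.regularity x hx
  refine ⟨y, hy, fun z hzy hzx => ?_⟩
  simpa [hxy] using ZFSet.mem_inter.2 ⟨hzx, hzy⟩

lemma _root_.ZFSet.prod_subset_powerset_powerset_union (x y : ZFSet) :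
    x.prod y ⊆ (x ∪ y).powerset.powerset := by
  intro p hp
  obtain ⟨a, ha, b, hb, rfl⟩ := ZFSet.mem_prod.1 hp
  simp [ZFSet.pair, ZFSet.subset_def, ha, hb]

lemma _root_.ZFSet.pair_epsilon_mem_choice {x y : ZFSet} (hy : y ∈ x) :
    ZFSet.pair y (Classical.epsilon (· ∈ y)) ∈ ZFSet.choice x :=
  (@ZFSet.mem_map _ (Classical.allZFSetDefinable _) _ _).2 ⟨y, hy, rfl⟩

namespace Vset

variable {o : Ordinal.{u}} {x y : ZFSet.{u}}

lemma mem_of_subset (h : x ⊆ y) (hy : y ∈ Vset o) : x ∈ Vset o :=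
  (ZFSet.rank_mono h).trans_lt hy

lemma sUnion_mem (hx : x ∈ Vset o) : ZFSet.sUnion x ∈ Vset o :=
  (ZFSet.rank_sUnion_le x).trans_lt hx

lemma sep_mem (p : ZFSet → Prop) (hx : x ∈ Vset o) : ZFSet.sep p x ∈ Vset o :=
  mem_of_subset ZFSet.sep_subset hx

lemma union_mem (hx : x ∈ Vset o) (hy : y ∈ Vset o) : x ∪ y ∈ Vset o := by
  rw [mem_Vset, ZFSet.rank_union]
  exact max_lt hx hy

lemma powerset_mem (ho : Order.IsSuccLimit o) (hx : x ∈ Vset o) :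
    ZFSet.powerset x ∈ Vset o := by
  rw [mem_Vset, ZFSet.rank_powerset]
  exact ho.succ_lt hx

lemma pair_mem (ho : Order.IsSuccLimit o) (hx : x ∈ Vset o) (hy : y ∈ Vset o) :
    ({x, y} : ZFSet) ∈ Vset o := by
  rw [mem_Vset, ZFSet.rank_pair]
  exact max_lt (ho.succ_lt hx) (ho.succ_lt hy)

lemma mem_of_isFunc (ho : Order.IsSuccLimit o) (hx : x ∈ Vset o) (hy : y ∈ Vset o) {f : ZFSet}
    (hf : ZFSet.IsFunc x y f) : f ∈ Vset o :=
  mem_of_subset (hf.1.trans (ZFSet.prod_subset_powerset_powerset_union x y))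
    (powerset_mem ho (powerset_mem ho (union_mem hx hy)))

end Vset

/-- if `κ < θ`, `κ` is a limit ordinal, and `V_κ ≺_{Σ₁} V_θ`, then `V_κ`
satisfies Zermelo set theory with choice: extensionality, foundation, pairing, union,
power set, infinity, choice, and full separation. -/
theorem stmt_9 (κ θ : Ordinal.{u}) (hlim : Order.IsSuccLimit κ) (hκθ : κ < θ)
    (h : SigmaPrec 1 (Vset κ) (Vset θ)) :
    -- extensionality
    (∀ x ∈ Vset κ, ∀ y ∈ Vset κ, (∀ z ∈ Vset κ, ((z : ZFSet) ∈ x ↔ z ∈ y)) → x = y) ∧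
    -- foundation
    (∀ x ∈ Vset κ, x ≠ (∅ : ZFSet) → ∃ y ∈ x.toSet, ∀ z ∈ y.toSet, z ∉ x.toSet) ∧
    -- pairing
    (∀ x ∈ Vset κ, ∀ y ∈ Vset κ, ({x, y} : ZFSet) ∈ Vset κ) ∧
    -- union
    (∀ x ∈ Vset κ, ZFSet.sUnion x ∈ Vset κ) ∧
    -- power set
    (∀ x ∈ Vset κ, ZFSet.powerset x ∈ Vset κ) ∧
    -- infinity
    (ZFSet.omega ∈ Vset κ) ∧
    -- choice
    (∀ x ∈ Vset κ, (∅ : ZFSet) ∉ x.toSet →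
      ∃ f ∈ Vset κ, ZFSet.IsFunc x (ZFSet.sUnion x) f ∧
        ∀ y ∈ x.toSet, ∃ z ∈ y.toSet, ZFSet.pair y z ∈ f) ∧
    -- full separation
    (∀ p : ZFSet → Prop, ∀ x ∈ Vset κ, ZFSet.sep p x ∈ Vset κ) := by
  have hω : ω < κ :=
    omega0_lt_of_sigmaPrec_one ((Ordinal.omega0_le_of_isSuccLimit hlim).trans_lt hκθ) h
  refine ⟨fun x hx y hy => (isTransClass_Vset κ).eq_of_forall_mem_iff hx hy,
    fun x _ => ZFSet.exists_mem_forall_not_mem_of_ne_empty,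
    fun x hx y hy => Vset.pair_mem hlim hx hy, fun x => Vset.sUnion_mem,
    fun x => Vset.powerset_mem hlim, ZFSet.rank_omega_le.trans_lt hω,
    fun x hx hx0 => ?_, fun p x => Vset.sep_mem p⟩
  have hfunc := ZFSet.choice_isFunc x hx0
  exact ⟨ZFSet.choice x, Vset.mem_of_isFunc hlim hx (Vset.sUnion_mem hx) hfunc, hfunc,
    fun y hy => ⟨_, ZFSet.choice_mem_aux x hx0 y hy, ZFSet.pair_epsilon_mem_choice hy⟩⟩

end

end Paper
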